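/- arXiv:0704.0257 — 4 statements merged into one kernel-verified Lean document; each statement's English description precedes it below -/
import Mathlib

section
/- Let b_0, …, b_n be positive integers, let 1 ≤ k ≤ n, and let p be a prime. Then the p-adic valuation of ℓ_k equals the sum of the k largest values among the p-adic valuations ν_p(b_0), …, ν_p(b_n); that is, if e_0 ≥ e_1 ≥ ⋯ ≥ e_n is the multiset {ν_p(b_i)} sorted in decreasing order, then ν_p(ℓ_k) = e_0 + e_1 + ⋯ + e_{k−1}. -/
/-! The `p`-adic valuation of `b_{i_0} ⋯ b_{i_k} / gcd(b_{i_0}, …, b_{i_k})` is the sum of the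
valuations of the chosen `b`'s minus the smallest one, that is, the largest sum of `k` of them.
Hence `ν_p(ℓ_k)`, the maximum of these over all `(k+1)`-subsets, is the largest sum of valuations
over `k`-subsets, and that is the sum of the `k` largest valuations. -/

/-- `ell b k` is the number `ℓ_k` of Kawasaki: the least common multiple, over all
`(k+1)`-element subsets `{i_0 < ⋯ < i_k}` of `{0, …, n}`, of
`b_{i_0} ⋯ b_{i_k} / gcd(b_{i_0}, …, b_{i_k})`. -/
def ell {n : ℕ} (b : Fin (n + 1) → ℕ) (k : ℕ) : ℕ :=
  ((Finset.univ : Finset (Fin (n + 1))).powersetCard (k + 1)).lcm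
    (fun s => (∏ i ∈ s, b i) / s.gcd b)

open Finset

namespace List

theorem sum_take_le_sum_take_cons {a : ℕ} {l : List ℕ} (ha : ∀ x ∈ l, x ≤ a) (j : ℕ) :
    (l.take j).sum ≤ ((a :: l).take j).sum := by
  cases j with
  | zero => simp
  | succ j =>
    rw [take_add_one, sum_append, take_succ_cons, sum_cons, add_comm a]
    gcongr
    cases h : l[j]? with
    | none => simp
    | some x => simpa using ha x (mem_of_getElem? h)

theorem sum_le_sum_take_of_le {l : List ℕ} (hl : l.Pairwise (· ≥ ·)) {m : Multiset ℕ}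
    (hm : m ≤ l) : m.sum ≤ (l.take (Multiset.card m)).sum := by
  induction l generalizing m with
  | nil => simp [Multiset.le_zero.mp hm]
  | cons a l ih =>
    obtain ⟨ha, hl⟩ := pairwise_cons.mp hl
    rw [← Multiset.cons_coe] at hm
    by_cases hma : a ∈ m
    · obtain ⟨m, rfl⟩ := Multiset.exists_cons_of_mem hma
      simpa using ih hl ((Multiset.cons_le_cons_iff a).mp hm)
    · exact (ih hl ((Multiset.le_cons_of_notMem hma).mp hm)).trans
        (sum_take_le_sum_take_cons ha _)

end List

theorem Multiset.exists_le_map_eq_of_le_map {α β : Type*} {f : α → β} {m : Multiset β}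
    {s : Multiset α} (h : m ≤ s.map f) : ∃ t ≤ s, t.map f = m := by
  induction m using Quotient.inductionOn
  induction s using Quotient.inductionOn
  obtain ⟨l, hl, hsub⟩ := h
  obtain ⟨l', hl', rfl⟩ := List.sublist_map_iff.mp hsub
  exact ⟨l', hl'.subperm, Quot.sound hl⟩

theorem Finset.factorization_gcd {ι : Type*} {f : ι → ℕ} {s : Finset ι} (hs : s.Nonempty)
    (hf : ∀ i ∈ s, f i ≠ 0) (p : ℕ) :
    (s.gcd f).factorization p = s.inf' hs fun i => (f i).factorization p := by
  classical
  induction hs using Finset.Nonempty.cons_induction with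
  | singleton => simp
  | cons a s ha hs ih =>
    have hgcd : s.gcd f ≠ 0 := fun h =>
      hf _ (mem_cons_of_mem hs.choose_spec) (gcd_eq_zero_iff.mp h _ hs.choose_spec)
    have hcons : (s.cons a ha).gcd f = Nat.gcd (f a) (s.gcd f) := by
      rw [cons_eq_insert, gcd_insert, gcd_eq_nat_gcd]
    rw [inf'_cons, hcons,
      Nat.factorization_gcd (hf a (mem_cons_self a s)) hgcd, Finsupp.inf_apply,
      ih fun i hi => hf i (mem_cons_of_mem hi)]

theorem Finset.factorization_prod_div_gcd {ι : Type*} {f : ι → ℕ} {s : Finset ι}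
    (hs : s.Nonempty) (hf : ∀ i ∈ s, f i ≠ 0) (p : ℕ) :
    ((∏ i ∈ s, f i) / s.gcd f).factorization p =
      (∑ i ∈ s, (f i).factorization p) - s.inf' hs fun i => (f i).factorization p := by
  obtain ⟨i, hi⟩ := hs
  rw [Nat.factorization_div ((Finset.gcd_dvd hi).trans (dvd_prod_of_mem f hi)),
    Finsupp.tsub_apply, Nat.factorization_prod hf, sum_apply', factorization_gcd ⟨i, hi⟩ hf]

theorem Finset.prod_div_gcd_ne_zero {ι : Type*} {f : ι → ℕ} {s : Finset ι}
    (hs : s.Nonempty) (hf : ∀ i ∈ s, f i ≠ 0) : (∏ i ∈ s, f i) / s.gcd f ≠ 0 := by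
  obtain ⟨i, hi⟩ := hs
  rw [Nat.div_ne_zero_iff_of_dvd ((Finset.gcd_dvd hi).trans (dvd_prod_of_mem f hi))]
  exact ⟨prod_ne_zero_iff.mpr hf, fun h => hf i hi (gcd_eq_zero_iff.mp h i hi)⟩

theorem Finset.sum_sub_inf'_eq_sup_sum_erase {ι : Type*} [DecidableEq ι] (v : ι → ℕ)
    {s : Finset ι} (hs : s.Nonempty) :
    (∑ i ∈ s, v i) - s.inf' hs v = s.sup fun j => ∑ i ∈ s.erase j, v i := by
  have hsum (j) (hj : j ∈ s) : ∑ i ∈ s.erase j, v i = (∑ i ∈ s, v i) - v j := by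
    rw [← sum_erase_add s v hj, Nat.add_sub_cancel]
  obtain ⟨j, hj, hmin⟩ := exists_mem_eq_inf' hs v
  refine le_antisymm ?_ (Finset.sup_le fun i hi => ?_)
  · exact hmin ▸ hsum j hj ▸ le_sup (f := fun j => ∑ i ∈ s.erase j, v i) hj
  · exact hsum i hi ▸ Nat.sub_le_sub_left (inf'_le v hi) _

theorem Finset.sup_powersetCard_succ_sup_erase {ι α : Type*} [DecidableEq ι] [SemilatticeSup α]
    [OrderBot α] (g : Finset ι → α) {t : Finset ι} {k : ℕ} (hk : k < #t) :
    ((t.powersetCard (k + 1)).sup fun s => s.sup fun j => g (s.erase j)) =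
      (t.powersetCard k).sup g := by
  refine le_antisymm (Finset.sup_le fun s hs => Finset.sup_le fun j hj => ?_)
    (Finset.sup_le fun u hu => ?_)
  · obtain ⟨hst, hcard⟩ := mem_powersetCard.mp hs
    refine le_sup (mem_powersetCard.mpr ⟨(erase_subset j s).trans hst, ?_⟩)
    rw [card_erase_of_mem hj, hcard, Nat.add_sub_cancel]
  · obtain ⟨hut, hcard⟩ := mem_powersetCard.mp hu
    obtain ⟨j, hjt, hju⟩ := exists_of_ssubset (hut.ssubset_of_ne (by rintro rfl; omega))
    have hs : insert j u ∈ t.powersetCard (k + 1) :=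
      mem_powersetCard.mpr ⟨insert_subset hjt hut, by rw [card_insert_of_notMem hju, hcard]⟩
    calc g u = g ((insert j u).erase j) := by rw [erase_insert hju]
      _ ≤ (insert j u).sup fun i => g ((insert j u).erase i) :=
        le_sup (f := fun i => g ((insert j u).erase i)) (mem_insert_self j u)
      _ ≤ _ := le_sup (f := fun s => s.sup fun j => g (s.erase j)) hs

theorem Finset.sup_powersetCard_sum_eq_sum_take {ι : Type*} (v : ι → ℕ) {t : Finset ι}
    {e : List ℕ} (he : (e : Multiset ℕ) = t.val.map v) (hsorted : e.Pairwise (· ≥ ·))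
    {k : ℕ} (hk : k ≤ #t) :
    ((t.powersetCard k).sup fun u => ∑ i ∈ u, v i) = (e.take k).sum := by
  refine le_antisymm (Finset.sup_le fun u hu => ?_) ?_
  · obtain ⟨hut, hcard⟩ := mem_powersetCard.mp hu
    have hle : u.val.map v ≤ e := he ▸ Multiset.map_le_map (val_le_iff.mpr hut)
    simpa [hcard] using List.sum_le_sum_take_of_le hsorted hle
  · have htake : ((e.take k : List ℕ) : Multiset ℕ) ≤ t.val.map v :=
      he ▸ Multiset.coe_le.mpr (List.take_sublist k e).subperm
    obtain ⟨u, hut, hu⟩ := Multiset.exists_le_map_eq_of_le_map htake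
    have hlen : e.length = #t := by simpa using congrArg Multiset.card he
    let u' : Finset ι := ⟨u, Multiset.nodup_of_le hut t.nodup⟩
    have hu' : u' ∈ t.powersetCard k := by
      refine mem_powersetCard.mpr ⟨val_le_iff.mp hut, ?_⟩
      simpa [u', hlen, hk] using congrArg Multiset.card hu
    calc (e.take k).sum = ∑ i ∈ u', v i := by simp [Finset.sum, u', hu]
      _ ≤ _ := le_sup (f := fun u => ∑ i ∈ u, v i) hu'

theorem factorization_ell_general {n : ℕ} (b : Fin (n + 1) → ℕ) (hb : ∀ i, 0 < b i)
    (k : ℕ) (hkn : k ≤ n) (p : ℕ)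
    (e : List ℕ) (he : e.Perm (List.ofFn fun i => (b i).factorization p))
    (hsorted : e.Pairwise (· ≥ ·)) :
    (ell b k).factorization p = (e.take k).sum := by
  set v : Fin (n + 1) → ℕ := fun i => (b i).factorization p
  have hb0 (s : Finset (Fin (n + 1))) : ∀ i ∈ s, b i ≠ 0 := fun i _ => (hb i).ne'
  have hne {s : Finset (Fin (n + 1))} (hs : s ∈ univ.powersetCard (k + 1)) : s.Nonempty :=
    card_pos.mp (by rw [(mem_powersetCard.mp hs).2]; exact k.succ_pos)
  have hterm : ∀ s ∈ univ.powersetCard (k + 1),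
      ((∏ i ∈ s, b i) / s.gcd b).factorization p = s.sup fun j => ∑ i ∈ s.erase j, v i :=
    fun s hs => by
      rw [factorization_prod_div_gcd (hne hs) (hb0 s), sum_sub_inf'_eq_sup_sum_erase]
  have hv : (e : Multiset ℕ) = univ.val.map v := by
    rw [Fin.univ_val_map]
    exact Multiset.coe_eq_coe.mpr he
  rw [ell, factorization_lcm fun s hs => prod_div_gcd_ne_zero (hne hs) (hb0 s),
    sup_congr rfl hterm, sup_powersetCard_succ_sup_erase (fun u => ∑ i ∈ u, v i) (by simpa),
    sup_powersetCard_sum_eq_sum_take v hv hsorted (by simpa using hkn.trans n.le_succ)]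

/-- for positive integers `b_0, …, b_n`, `1 ≤ k ≤ n`, and a prime `p`,
the `p`-adic valuation of `ℓ_k` is the sum of the `k` largest values among the
`p`-adic valuations `ν_p(b_0), …, ν_p(b_n)`: if `e` is the multiset
`{ν_p(b_i)}` listed in (weakly) decreasing order, then
`ν_p(ℓ_k) = e_0 + ⋯ + e_{k-1}`. -/
theorem factorization_ell {n : ℕ} (b : Fin (n + 1) → ℕ) (hb : ∀ i, 0 < b i)
    (k : ℕ) (hk1 : 1 ≤ k) (hkn : k ≤ n) (p : ℕ) (hp : p.Prime)
    (e : List ℕ) (he : e.Perm (List.ofFn fun i => (b i).factorization p))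
    (hsorted : e.Pairwise (· ≥ ·)) :
    (ell b k).factorization p = (e.take k).sum :=
  factorization_ell_general b hb k hkn p e he hsorted
end

section
/- Let b_0, …, b_n be positive integers and let k, m ≥ 1 be integers with k + m ≤ n. Then ℓ_{k+m} divides ℓ_k · ℓ_m. (In particular, the coefficient ℓ_k·ℓ_m/ℓ_{k+m} appearing in Kawasaki's product formula for the cohomology of weighted projective space is an integer.) -/
namespace Finset

variable {ι : Type*}

theorem gcd_dvd_prod {s : Finset ι} {j : ι} (hj : j ∈ s) (b : ι → ℕ) :
    s.gcd b ∣ ∏ i ∈ s, b i :=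
  (gcd_dvd hj).trans (dvd_prod_of_mem b hj)

theorem lcm_gcd_dvd_prod_inter [DecidableEq ι] {s t : Finset ι} (hst : (s ∩ t).Nonempty)
    (b : ι → ℕ) : Nat.lcm (s.gcd b) (t.gcd b) ∣ ∏ i ∈ s ∩ t, b i := by
  obtain ⟨j, hj⟩ := hst
  obtain ⟨hjs, hjt⟩ := mem_inter.mp hj
  exact (Nat.lcm_dvd (gcd_dvd hjs) (gcd_dvd hjt)).trans (dvd_prod_of_mem b hj)

theorem prod_div_gcd_union_dvd [DecidableEq ι] {s t : Finset ι} (hst : (s ∩ t).Nonempty)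
    (b : ι → ℕ) :
    (∏ i ∈ s ∪ t, b i) / (s ∪ t).gcd b ∣
      ((∏ i ∈ s, b i) / s.gcd b) * ((∏ i ∈ t, b i) / t.gcd b) := by
  obtain ⟨j, hj⟩ := hst
  obtain ⟨hjs, hjt⟩ := mem_inter.mp hj
  refine ⟨(∏ i ∈ s ∩ t, b i) / Nat.lcm (s.gcd b) (t.gcd b), ?_⟩
  rw [Nat.div_mul_div_comm (gcd_dvd_prod hjs b) (gcd_dvd_prod hjt b),
    Nat.div_mul_div_comm (gcd_dvd_prod (mem_union_left t hjs) b)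
      (lcm_gcd_dvd_prod_inter ⟨j, hj⟩ b),
    prod_union_inter, gcd_union]
  exact congrArg _ (Nat.gcd_mul_lcm _ _).symm

theorem exists_union_eq_inter_nonempty_of_card_eq [DecidableEq ι] {s : Finset ι} {k m : ℕ}
    (hs : #s = k + m + 1) :
    ∃ s₁ s₂ : Finset ι, #s₁ = k + 1 ∧ #s₂ = m + 1 ∧ s₁ ∪ s₂ = s ∧ (s₁ ∩ s₂).Nonempty := by
  obtain ⟨s₁, hs₁, hcard₁⟩ := exists_subset_card_eq (s := s) (n := k + 1) (by omega)
  obtain ⟨j, hj⟩ := card_pos.mp (show 0 < #s₁ by omega)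
  have hj' : j ∉ s \ s₁ := fun h => (mem_sdiff.mp h).2 hj
  refine ⟨s₁, insert j (s \ s₁), ?_, ?_, ?_, ⟨j, mem_inter.mpr ⟨hj, mem_insert_self _ _⟩⟩⟩
  · exact hcard₁
  · rw [card_insert_of_notMem hj', card_sdiff_of_subset hs₁]
    omega
  · rw [union_insert, union_sdiff_of_subset hs₁, insert_eq_of_mem (hs₁ hj)]

end Finset

open Finset in
theorem prod_div_gcd_dvd_ell {n : ℕ} (b : Fin (n + 1) → ℕ) {k : ℕ} {s : Finset (Fin (n + 1))}
    (hs : #s = k + 1) : (∏ i ∈ s, b i) / s.gcd b ∣ ell b k :=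
  dvd_lcm (mem_powersetCard.mpr ⟨subset_univ s, hs⟩)

theorem ell_add_dvd_mul_general {n : ℕ} (b : Fin (n + 1) → ℕ) (k m : ℕ) :
    ell b (k + m) ∣ ell b k * ell b m := by
  refine Finset.lcm_dvd fun s hs => ?_
  obtain ⟨s₁, s₂, hcard₁, hcard₂, rfl, hinter⟩ :=
    Finset.exists_union_eq_inter_nonempty_of_card_eq (Finset.mem_powersetCard.mp hs).2
  exact (Finset.prod_div_gcd_union_dvd hinter b).trans
    (mul_dvd_mul (prod_div_gcd_dvd_ell b hcard₁) (prod_div_gcd_dvd_ell b hcard₂))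

/-- for positive integers `b_0, …, b_n` and `k, m ≥ 1` with
`k + m ≤ n`, `ℓ_{k+m}` divides `ℓ_k · ℓ_m`. -/
theorem ell_add_dvd_mul {n : ℕ} (b : Fin (n + 1) → ℕ) (hb : ∀ i, 0 < b i)
    (k m : ℕ) (hk : 1 ≤ k) (hm : 1 ≤ m) (hkm : k + m ≤ n) :
    ell b (k + m) ∣ ell b k * ell b m :=
  ell_add_dvd_mul_general b k m
end

section
/- Let b_0, …, b_n be positive integers and let 1 ≤ k ≤ n − 1. Then ℓ_k divides ℓ_{k+1}. -/
theorem Finset.prod_div_gcd_dvd_prod_div_gcd_of_ssubset {ι : Type*} [DecidableEq ι]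
    {s u : Finset ι} (b : ι → ℕ) (hs : s.Nonempty) (hsu : s ⊂ u) :
    (∏ i ∈ s, b i) / s.gcd b ∣ (∏ i ∈ u, b i) / u.gcd b := by
  obtain ⟨i, hi⟩ := hs
  obtain ⟨j, hj⟩ := Finset.sdiff_nonempty.mpr hsu.not_subset
  have hgs : s.gcd b ∣ ∏ i ∈ s, b i := (Finset.gcd_dvd hi).trans (Finset.dvd_prod_of_mem b hi)
  have hgu : u.gcd b ∣ ∏ i ∈ u \ s, b i :=
    (Finset.gcd_dvd (Finset.mem_sdiff.mp hj).1).trans (Finset.dvd_prod_of_mem b hj)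
  rw [← Finset.prod_sdiff hsu.subset, Nat.dvd_div_iff_mul_dvd (hgu.mul_right _)]
  exact mul_dvd_mul hgu (Nat.div_dvd_of_dvd hgs)

theorem ell_dvd_ell_succ_general {n : ℕ} (b : Fin (n + 1) → ℕ)
    (k : ℕ) (hkn : k + 1 ≤ n) :
    ell b k ∣ ell b (k + 1) := by
  refine Finset.lcm_dvd fun s hs => ?_
  have hcard : s.card = k + 1 := (Finset.mem_powersetCard.mp hs).2
  obtain ⟨u, hsu, -, hucard⟩ := Finset.exists_subsuperset_card_eq s.subset_univ
    (n := k + 2) (by omega) (by simp only [Finset.card_univ, Fintype.card_fin]; omega)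
  have hu : u ∈ (Finset.univ : Finset (Fin (n + 1))).powersetCard (k + 2) :=
    Finset.mem_powersetCard.mpr ⟨u.subset_univ, hucard⟩
  have hsu' : s ⊂ u := Finset.ssubset_iff_subset_ne.mpr ⟨hsu, by rintro rfl; omega⟩
  exact (Finset.prod_div_gcd_dvd_prod_div_gcd_of_ssubset b
    (Finset.card_pos.mp (by omega)) hsu').trans (Finset.dvd_lcm hu)

/-- for positive integers `b_0, …, b_n` and `1 ≤ k ≤ n - 1`,
`ℓ_k` divides `ℓ_{k+1}`. -/
theorem ell_dvd_ell_succ {n : ℕ} (b : Fin (n + 1) → ℕ) (hb : ∀ i, 0 < b i)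
    (k : ℕ) (hk : 1 ≤ k) (hkn : k + 1 ≤ n) :
    ell b k ∣ ell b (k + 1) :=
  ell_dvd_ell_succ_general b k hkn
end

section
/- Let b_0, …, b_n be positive integers and let 1 ≤ k, m ≤ n be integers with k + m ≥ n + 1. Then the product b_0·b_1·⋯·b_n divides ℓ_k · ℓ_m. -/
open Finset

theorem Finset.exists_sum_le_sum_erase_add_sum_erase {ι M : Type*} [Fintype ι] [DecidableEq ι]
    [AddCommMonoid M] [PartialOrder M] [IsOrderedAddMonoid M] [CanonicallyOrderedAdd M]
    (e : ι → M) {i₀ : ι} (he : ∀ j, e i₀ ≤ e j) {k m : ℕ} (hk : k < Fintype.card ι)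
    (hm : m < Fintype.card ι) (hkm : Fintype.card ι ≤ k + m) :
    ∃ s t : Finset ι, #s = k + 1 ∧ #t = m + 1 ∧ i₀ ∈ s ∧ i₀ ∈ t ∧
      ∑ i, e i ≤ ∑ i ∈ s.erase i₀, e i + ∑ i ∈ t.erase i₀, e i := by
  obtain ⟨t, hi₀t, -, ht⟩ := exists_subsuperset_card_eq (n := m + 1) (subset_univ {i₀})
    (by simp) (by simpa using hm)
  rw [singleton_subset_iff] at hi₀t
  obtain ⟨j, hj⟩ : (t.erase i₀).Nonempty := by
    rw [← card_pos, card_erase_of_mem hi₀t, ht]; omega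
  have hsub : insert j tᶜ ⊆ univ.erase i₀ := by
    rw [insert_subset_iff]
    refine ⟨by simpa using ne_of_mem_erase hj, fun x hx => mem_erase.2 ⟨?_, mem_univ x⟩⟩
    rintro rfl
    exact mem_compl.1 hx hi₀t
  obtain ⟨s, hjs, hs₀, hs⟩ := exists_subsuperset_card_eq (n := k) hsub
    (by grind [card_insert_le, card_compl]) (by simp [card_erase_of_mem]; omega)
  have hi₀s : i₀ ∉ s := fun h => by simpa using hs₀ h
  refine ⟨insert i₀ s, t, by simp [hi₀s, hs], ht, mem_insert_self _ _, hi₀t, ?_⟩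
  rw [erase_insert hi₀s]
  calc ∑ i, e i = ∑ i ∈ tᶜ, e i + (e i₀ + ∑ i ∈ t.erase i₀, e i) := by
        rw [add_sum_erase _ _ hi₀t, sum_compl_add_sum]
    _ ≤ (e j + ∑ i ∈ tᶜ, e i) + ∑ i ∈ t.erase i₀, e i := by
        rw [← add_assoc, add_comm (∑ i ∈ tᶜ, e i)]; gcongr; exact he j
    _ = ∑ i ∈ insert j tᶜ, e i + ∑ i ∈ t.erase i₀, e i := by
        rw [sum_insert (by simpa using mem_of_mem_erase hj)]
    _ ≤ ∑ i ∈ s, e i + ∑ i ∈ t.erase i₀, e i := by gcongr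

theorem Finset.prod_erase_dvd_prod_div_gcd {ι : Type*} [DecidableEq ι] (b : ι → ℕ)
    {s : Finset ι} {i : ι} (hi : i ∈ s) : ∏ j ∈ s.erase i, b j ∣ (∏ j ∈ s, b j) / s.gcd b := by
  refine Nat.dvd_div_of_mul_dvd ?_
  rw [← mul_prod_erase s b hi]
  exact mul_dvd_mul_right (gcd_dvd hi) _

theorem Nat.sum_factorization_le_of_prod_dvd {ι : Type*} {s : Finset ι} {b : ι → ℕ} {N : ℕ}
    (hN : N ≠ 0) (h : ∏ i ∈ s, b i ∣ N) (p : ℕ) :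
    ∑ i ∈ s, (b i).factorization p ≤ N.factorization p := by
  have hb : ∀ i ∈ s, b i ≠ 0 := prod_ne_zero_iff.1 (ne_zero_of_dvd_ne_zero hN h)
  rw [← Nat.factorization_prod_apply hb]
  exact (Nat.factorization_le_iff_dvd (prod_ne_zero_iff.2 hb) hN).2 h p

section ell

variable {n : ℕ} (b : Fin (n + 1) → ℕ)

theorem prod_erase_dvd_ell {k : ℕ} {s : Finset (Fin (n + 1))} (hs : #s = k + 1) {i : Fin (n + 1)}
    (hi : i ∈ s) : ∏ j ∈ s.erase i, b j ∣ ell b k :=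
  (prod_erase_dvd_prod_div_gcd b hi).trans
    (Finset.dvd_lcm (mem_powersetCard.2 ⟨subset_univ s, hs⟩))

theorem ell_ne_zero (hb : ∀ i, b i ≠ 0) (k : ℕ) : ell b k ≠ 0 := by
  refine lcm_ne_zero_iff.2 fun s hs => ?_
  obtain ⟨i, hi⟩ : s.Nonempty := card_pos.1 (by simp [(mem_powersetCard.1 hs).2])
  have hprod : ∏ j ∈ s, b j ≠ 0 := prod_ne_zero_iff.2 fun j _ => hb j
  exact left_ne_zero_of_mul <|
    (Nat.div_mul_cancel ((gcd_dvd hi).trans (dvd_prod_of_mem b hi))).symm ▸ hprod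

end ell

theorem prod_dvd_ell_mul_ell_general {n : ℕ} (b : Fin (n + 1) → ℕ) (hb : ∀ i, 0 < b i)
    (k m : ℕ) (hkn : k ≤ n) (hmn : m ≤ n)
    (hkm : n + 1 ≤ k + m) :
    (∏ i, b i) ∣ ell b k * ell b m := by
  have hb₀ : ∀ i, b i ≠ 0 := fun i => (hb i).ne'
  have hk := ell_ne_zero b hb₀ k
  have hm := ell_ne_zero b hb₀ m
  rw [← Nat.factorization_le_iff_dvd (prod_ne_zero_iff.2 fun i _ => hb₀ i) (mul_ne_zero hk hm)]
  intro p
  obtain ⟨i₀, hi₀⟩ := Finite.exists_min fun i => (b i).factorization p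
  obtain ⟨s, t, hs, ht, hi₀s, hi₀t, hsum⟩ := exists_sum_le_sum_erase_add_sum_erase
    (fun i => (b i).factorization p) hi₀ (k := k) (m := m) (by simpa using hkn)
    (by simpa using hmn) (by simpa using hkm)
  calc (∏ i, b i).factorization p = ∑ i, (b i).factorization p :=
        Nat.factorization_prod_apply fun i _ => hb₀ i
    _ ≤ _ := hsum
    _ ≤ (ell b k).factorization p + (ell b m).factorization p :=
        add_le_add (Nat.sum_factorization_le_of_prod_dvd hk (prod_erase_dvd_ell b hs hi₀s) p)
          (Nat.sum_factorization_le_of_prod_dvd hm (prod_erase_dvd_ell b ht hi₀t) p)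
    _ = (ell b k * ell b m).factorization p := by rw [Nat.factorization_mul hk hm]; rfl

/-- for positive integers `b_0, …, b_n` and `1 ≤ k, m ≤ n` with
`k + m ≥ n + 1`, the product `b_0 ⋯ b_n` divides `ℓ_k · ℓ_m`. -/
theorem prod_dvd_ell_mul_ell {n : ℕ} (b : Fin (n + 1) → ℕ) (hb : ∀ i, 0 < b i)
    (k m : ℕ) (hk1 : 1 ≤ k) (hkn : k ≤ n) (hm1 : 1 ≤ m) (hmn : m ≤ n)
    (hkm : n + 1 ≤ k + m) :
    (∏ i, b i) ∣ ell b k * ell b m :=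
  prod_dvd_ell_mul_ell_general b hb k m hkn hmn hkm
end
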